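/- If the cost function c over the alphabet 𝒳 is non-negative and symmetric, then the generalized tree edit distance d_c is symmetric: for all trees x̄, ȳ over 𝒳, d_c(x̄, ȳ) = d_c(ȳ, x̄). -/

import Mathlib

namespace TED

/-- A tree over an alphabet `α`: a label together with a (possibly empty) list of children. -/
inductive PTree (α : Type) where
  | node : α → List (PTree α) → PTree α

/-- A forest over `α` is a finite list of trees; `[]` is the empty forest `ε`. -/
abbrev Forest (α : Type) := List (PTree α)

namespace PTree

/-- The label of (the root of) a tree. -/
def label {α : Type} : PTree α → α
  | node a _ => a

/-- The children of (the root of) a tree. -/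
def children {α : Type} : PTree α → List (PTree α)
  | node _ cs => cs

mutual
  /-- The number of nodes of a tree. -/
  def size {α : Type} : PTree α → ℕ
    | node _ cs => 1 + sizeL cs
  /-- The number of nodes of a forest. -/
  def sizeL {α : Type} : List (PTree α) → ℕ
    | [] => 0
    | t :: ts => size t + sizeL ts
end

mutual
  /-- The pre-order list of all subtrees of a tree. -/
  def subtreesT {α : Type} : PTree α → List (PTree α)
    | node a cs => node a cs :: subtreesL cs
  /-- The pre-order list of all subtrees of a forest. -/
  def subtreesL {α : Type} : List (PTree α) → List (PTree α)
    | [] => []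
    | t :: ts => subtreesT t ++ subtreesL ts
end

end PTree

open PTree

/-- The pre-order `π(X)` of a forest: the list of all its subtrees. -/
def preorder {α : Type} (F : Forest α) : List (PTree α) := PTree.subtreesL F

/-- The size `|X|` of a forest: the length of its pre-order. -/
def fsize {α : Type} (F : Forest α) : ℕ := (preorder F).length

/-- The `i`-th subtree `x̄_i` (1-indexed pre-order) of a forest, if it exists. -/
def treeAt {α : Type} (F : Forest α) (i : ℕ) : Option (PTree α) := (preorder F)[i - 1]?

/-- The label `x_i` of the `i`-th subtree, as an element of `𝒳 ∪ {−}`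
(`none` plays the role of the gap symbol `−`). -/
def labelAt {α : Type} (F : Forest α) (i : ℕ) : Option α := (treeAt F i).map PTree.label

/-- The number of nodes of the `i`-th subtree `x̄_i`. -/
def sizeAt {α : Type} (F : Forest α) (i : ℕ) : ℕ := ((treeAt F i).map PTree.size).getD 0

/-- A cost function over `α`: a real-valued function on `(𝒳 ∪ {−}) × (𝒳 ∪ {−})`,
where the gap symbol `−` is modelled by `none`. -/
abbrev Cost (α : Type) := Option α → Option α → ℝ

/-- `c` is non-negative. -/
def Nonneg {α : Type} (c : Cost α) : Prop := ∀ x y, 0 ≤ c x y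
/-- `c` is self-equal. -/
def SelfEq {α : Type} (c : Cost α) : Prop := ∀ x, c x x = 0
/-- `c` is discernible. -/
def Discernible {α : Type} (c : Cost α) : Prop := ∀ x y, x ≠ y → 0 < c x y
/-- `c` is symmetric. -/
def Symm {α : Type} (c : Cost α) : Prop := ∀ x y, c x y = c y x
/-- `c` conforms to the triangular inequality. -/
def Triangle {α : Type} (c : Cost α) : Prop := ∀ x y z, c x z ≤ c x y + c y z

/-- Deletion of the first root: its children are spliced into its place. -/
def delRoot {α : Type} : Forest α → Forest α
  | [] => []
  | PTree.node _ cs :: ts => cs ++ ts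

/-- Replacement of the label of the first root by `y`. -/
def repRoot {α : Type} (y : α) : Forest α → Forest α
  | [] => []
  | PTree.node _ cs :: ts => PTree.node y cs :: ts

/-- Insertion of a new root labeled `y` at root level, adopting the trees
`l` to `r-1` of the forest as its children. -/
def insRoot {α : Type} (y : α) (l r : ℕ) (F : Forest α) : Forest α :=
  if r > F.length + 1 ∨ l > r ∨ l < 1 then F
  else if l = r then F.take (l - 1) ++ [PTree.node y []] ++ F.drop (l - 1)
  else F.take (l - 1) ++ [PTree.node y ((F.drop (l - 1)).take (r - l))] ++ F.drop (r - 1)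

/-- `del_i`: deletion of the node with pre-order index `i`. -/
def applyDel {α : Type} : ℕ → Forest α → Forest α
  | _, [] => []
  | i, PTree.node a cs :: ts =>
    if i < 1 then PTree.node a cs :: ts
    else if i = 1 then delRoot (PTree.node a cs :: ts)
    else if i ≤ size (PTree.node a cs) then PTree.node a (applyDel (i - 1) cs) :: ts
    else PTree.node a cs :: applyDel (i - size (PTree.node a cs)) ts
  termination_by _ F => sizeOf F

/-- `rep_{i,y}`: replacement of the label of the node with pre-order index `i` by `y`. -/
def applyRep {α : Type} (y : α) : ℕ → Forest α → Forest α
  | _, [] => []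
  | i, PTree.node a cs :: ts =>
    if i < 1 then PTree.node a cs :: ts
    else if i = 1 then repRoot y (PTree.node a cs :: ts)
    else if i ≤ size (PTree.node a cs) then PTree.node a (applyRep y (i - 1) cs) :: ts
    else PTree.node a cs :: applyRep y (i - size (PTree.node a cs)) ts
  termination_by _ F => sizeOf F

/-- `ins_{i,y,l,r}`: insertion of a node labeled `y` as a child of the node with
pre-order index `i` (at root level if `i = 0`), adopting that node's children
`l` through `r-1` as its children. -/
def applyIns {α : Type} (y : α) (l r : ℕ) : ℕ → Forest α → Forest α
  | 0, F => insRoot y l r F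
  | _ + 1, [] => []
  | i + 1, PTree.node a cs :: ts =>
    if i + 1 ≤ size (PTree.node a cs) then PTree.node a (applyIns y l r i cs) :: ts
    else PTree.node a cs :: applyIns y l r (i + 1 - size (PTree.node a cs)) ts
  termination_by _ F => sizeOf F

/-- The standard edits: deletions `del_i`, replacements `rep_{i,y}` and
insertions `ins_{i,y,l,r}`. -/
inductive Edit (α : Type) where
  | del (i : ℕ)
  | rep (i : ℕ) (y : α)
  | ins (i : ℕ) (y : α) (l r : ℕ)

/-- Application of a single edit to a forest. -/
def Edit.apply {α : Type} : Edit α → Forest α → Forest α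
  | .del i, F => applyDel i F
  | .rep i y, F => applyRep y i F
  | .ins i y l r, F => applyIns y l r i F

/-- Application of an edit script `δ̄ = δ₁,…,δ_T` to a forest (left to right). -/
def applyScript {α : Type} (δ : List (Edit α)) (F : Forest α) : Forest α :=
  δ.foldl (fun F e => e.apply F) F

open Classical in
/-- The cost of a single edit with respect to the forest it is applied to:
`0` if the edit leaves the forest unchanged, and otherwise `c(x_i, y)` for a
replacement, `c(x_i, −)` for a deletion and `c(−, y)` for an insertion. -/
noncomputable def editCost {α : Type} (c : Cost α) (e : Edit α) (F : Forest α) : ℝ :=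
  if e.apply F = F then 0
  else
    match e with
    | .del i => c (labelAt F i) none
    | .rep i y => c (labelAt F i) (some y)
    | .ins _ y _ _ => c none (some y)

/-- The cost `c(δ̄, X)` of an edit script: the sum of the costs of its edits,
each evaluated on the forest to which it is applied. -/
noncomputable def scriptCost {α : Type} (c : Cost α) : List (Edit α) → Forest α → ℝ
  | [], _ => 0
  | e :: es, F => editCost c e F + scriptCost c es (e.apply F)

/-- The (subforest) edit distance `D_c(F, G)`: the infimum of the costs of edit
scripts transforming `F` into `G`. -/
noncomputable def fdist {α : Type} (c : Cost α) (F G : Forest α) : ℝ :=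
  sInf { r : ℝ | ∃ δ : List (Edit α), applyScript δ F = G ∧ scriptCost c δ F = r }

/-- The generalized tree edit distance `d_c(x̄, ȳ)` between two trees. -/
noncomputable def ted {α : Type} (c : Cost α) (x y : PTree α) : ℝ := fdist c [x] [y]

/-! If `c` is symmetric, every edit that changes a forest is undone by a single edit of the same
cost: a replacement `x ↦ y` by `y ↦ x`, an insertion by deleting the new node, and a deletion by
re-inserting the node under its former parent, adopting its former children. Reversing an edit
script from `F` to `G` therefore gives a script from `G` to `F` of the same cost, so both distances
are infima of the same set of costs. -/

section

variable {α : Type}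

lemma size_node (b : α) (cs : Forest α) : size (node b cs) = 1 + sizeL cs := by rw [size]

lemma sizeL_cons (t : PTree α) (ts : Forest α) : sizeL (t :: ts) = size t + sizeL ts := by
  rw [sizeL]

lemma one_le_size (t : PTree α) : 1 ≤ size t := by
  cases t; rw [size]; omega

lemma subtreesL_append (A B : Forest α) : subtreesL (A ++ B) = subtreesL A ++ subtreesL B := by
  induction A with
  | nil => simp [subtreesL]
  | cons t ts ih => simp [subtreesL, ih]

mutual
lemma length_subtreesT : ∀ t : PTree α, (subtreesT t).length = size t
  | node b cs => by rw [subtreesT, size, List.length_cons, length_subtreesL cs]; omega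
lemma length_subtreesL : ∀ F : Forest α, (subtreesL F).length = sizeL F
  | [] => by rw [subtreesL, sizeL]; rfl
  | t :: ts => by
    rw [subtreesL, sizeL, List.length_append, length_subtreesT t, length_subtreesL ts]
end

lemma labelAt_cons_one (b : α) (cs ts : Forest α) : labelAt (node b cs :: ts) 1 = some b := by
  simp [labelAt, treeAt, preorder, subtreesL, subtreesT, PTree.label]

lemma labelAt_cons_of_le {i : ℕ} (b : α) (cs ts : Forest α) (h₁ : 2 ≤ i)
    (h₂ : i ≤ size (node b cs)) : labelAt (node b cs :: ts) i = labelAt cs (i - 1) := by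
  obtain ⟨k, rfl⟩ : ∃ k, i = k + 2 := ⟨i - 2, by omega⟩
  rw [size_node] at h₂
  simp only [labelAt, treeAt, preorder, subtreesL, subtreesT, List.cons_append]
  rw [show k + 2 - 1 = k + 1 by omega, List.getElem?_cons_succ,
    List.getElem?_append_left (by rw [length_subtreesL]; omega)]
  rfl

lemma labelAt_cons_of_size_lt {i : ℕ} (t : PTree α) (ts : Forest α) (h : size t < i) :
    labelAt (t :: ts) i = labelAt ts (i - size t) := by
  simp only [labelAt, treeAt, preorder, subtreesL]
  rw [List.getElem?_append_right (by rw [length_subtreesT]; omega), length_subtreesT]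
  congr 2; omega

lemma labelAt_append_cons (A : Forest α) (t : PTree α) (B : Forest α) :
    labelAt (A ++ t :: B) (sizeL A + 1) = some t.label := by
  cases t
  simp [labelAt, treeAt, preorder, subtreesL_append, length_subtreesL, subtreesL, subtreesT]

lemma le_sizeL_of_labelAt_eq_some {F : Forest α} {i : ℕ} {a : α} (h : labelAt F i = some a) :
    i ≤ sizeL F := by
  have : i - 1 < (preorder F).length := by
    by_contra hle
    simp [labelAt, treeAt, List.getElem?_eq_none (not_lt.mp hle)] at h
  rw [preorder, length_subtreesL] at this
  omega

theorem Forest.index_induction {motive : ℕ → Forest α → Prop}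
    (zero : ∀ F, motive 0 F) (nil : ∀ i, 1 ≤ i → motive i [])
    (child : ∀ i b cs ts, 1 ≤ i → i ≤ size (node b cs) → motive (i - 1) cs →
      motive i (node b cs :: ts))
    (sibling : ∀ i b cs ts, size (node b cs) < i → motive (i - size (node b cs)) ts →
      motive i (node b cs :: ts)) :
    ∀ i F, motive i F
  | 0, F => zero F
  | i + 1, [] => nil (i + 1) (by omega)
  | i + 1, node b cs :: ts =>
    if h : i + 1 ≤ size (node b cs) then
      child (i + 1) b cs ts (by omega) h
        (Forest.index_induction zero nil child sibling (i + 1 - 1) cs)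
    else
      sibling (i + 1) b cs ts (by omega)
        (Forest.index_induction zero nil child sibling (i + 1 - size (node b cs)) ts)
termination_by _ F => sizeOf F

lemma applyDel_zero (F : Forest α) : applyDel 0 F = F := by
  cases F with
  | nil => rw [applyDel]
  | cons t ts => cases t; rw [applyDel, if_pos Nat.zero_lt_one]

lemma applyDel_nil (i : ℕ) : applyDel i ([] : Forest α) = [] := by rw [applyDel]

lemma applyDel_cons_one (b : α) (cs ts : Forest α) :
    applyDel 1 (node b cs :: ts) = cs ++ ts := by
  rw [applyDel, if_neg (by omega), if_pos rfl, delRoot]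

lemma applyDel_cons_of_le {i : ℕ} (b : α) (cs ts : Forest α) (h₁ : 2 ≤ i)
    (h₂ : i ≤ size (node b cs)) :
    applyDel i (node b cs :: ts) = node b (applyDel (i - 1) cs) :: ts := by
  rw [applyDel, if_neg (by omega), if_neg (by omega), if_pos h₂]

lemma applyDel_cons_of_size_lt {i : ℕ} (b : α) (cs ts : Forest α) (h : size (node b cs) < i) :
    applyDel i (node b cs :: ts) = node b cs :: applyDel (i - size (node b cs)) ts := by
  have := one_le_size (node b cs)
  rw [applyDel, if_neg (by omega), if_neg (by omega), if_neg (by omega)]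

lemma applyRep_zero (y : α) (F : Forest α) : applyRep y 0 F = F := by
  cases F with
  | nil => rw [applyRep]
  | cons t ts => cases t; rw [applyRep, if_pos Nat.zero_lt_one]

lemma applyRep_nil (y : α) (i : ℕ) : applyRep y i ([] : Forest α) = [] := by rw [applyRep]

lemma applyRep_cons_one (y b : α) (cs ts : Forest α) :
    applyRep y 1 (node b cs :: ts) = node y cs :: ts := by
  rw [applyRep, if_neg (by omega), if_pos rfl, repRoot]

lemma applyRep_cons_of_le {i : ℕ} (y b : α) (cs ts : Forest α) (h₁ : 2 ≤ i)
    (h₂ : i ≤ size (node b cs)) :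
    applyRep y i (node b cs :: ts) = node b (applyRep y (i - 1) cs) :: ts := by
  rw [applyRep, if_neg (by omega), if_neg (by omega), if_pos h₂]

lemma applyRep_cons_of_size_lt {i : ℕ} (y b : α) (cs ts : Forest α)
    (h : size (node b cs) < i) :
    applyRep y i (node b cs :: ts) = node b cs :: applyRep y (i - size (node b cs)) ts := by
  have := one_le_size (node b cs)
  rw [applyRep, if_neg (by omega), if_neg (by omega), if_neg (by omega)]

lemma applyIns_zero (y : α) (l r : ℕ) (F : Forest α) :
    applyIns y l r 0 F = insRoot y l r F := by
  rw [applyIns]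

lemma applyIns_nil (y : α) {l r i : ℕ} (h : 1 ≤ i) :
    applyIns y l r i ([] : Forest α) = [] := by
  obtain ⟨k, rfl⟩ : ∃ k, i = k + 1 := ⟨i - 1, by omega⟩
  rw [applyIns]

lemma applyIns_cons_of_le (y : α) {l r i : ℕ} (b : α) (cs ts : Forest α) (h₁ : 1 ≤ i)
    (h₂ : i ≤ size (node b cs)) :
    applyIns y l r i (node b cs :: ts) = node b (applyIns y l r (i - 1) cs) :: ts := by
  obtain ⟨k, rfl⟩ : ∃ k, i = k + 1 := ⟨i - 1, by omega⟩
  rw [applyIns, if_pos h₂, Nat.add_sub_cancel]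

lemma applyIns_cons_of_size_lt (y : α) {l r i : ℕ} (b : α) (cs ts : Forest α)
    (h : size (node b cs) < i) :
    applyIns y l r i (node b cs :: ts) = node b cs :: applyIns y l r (i - size (node b cs)) ts := by
  obtain ⟨k, rfl⟩ : ∃ k, i = k + 1 := ⟨i - 1, by have := one_le_size (node b cs); omega⟩
  rw [applyIns, if_neg (by omega)]

theorem exists_applyRep_inverse (y : α) (i : ℕ) (F : Forest α) (h : applyRep y i F ≠ F) :
    ∃ a, labelAt F i = some a ∧ labelAt (applyRep y i F) i = some y ∧
      applyRep a i (applyRep y i F) = F := by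
  induction i, F using Forest.index_induction with
  | zero F => exact absurd (applyRep_zero y F) h
  | nil i _ => exact absurd (applyRep_nil y i) h
  | child i b cs ts h₁ h₂ ih =>
    rcases Nat.lt_or_ge i 2 with hi | hi
    · obtain rfl : i = 1 := by omega
      refine ⟨b, labelAt_cons_one b cs ts, ?_, ?_⟩ <;>
        simp only [applyRep_cons_one, labelAt_cons_one]
    · rw [applyRep_cons_of_le y b cs ts hi h₂] at h ⊢
      obtain ⟨a, ha, hy, hinv⟩ := ih fun he => h (by rw [he])
      have h₂' : i ≤ size (node b (applyRep y (i - 1) cs)) := by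
        have := le_sizeL_of_labelAt_eq_some hy; rw [size_node]; omega
      refine ⟨a, ?_, ?_, ?_⟩
      · rwa [labelAt_cons_of_le b cs ts hi h₂]
      · rwa [labelAt_cons_of_le b _ ts hi h₂']
      · rw [applyRep_cons_of_le a b _ ts hi h₂', hinv]
  | sibling i b cs ts hlt ih =>
    rw [applyRep_cons_of_size_lt y b cs ts hlt] at h ⊢
    obtain ⟨a, ha, hy, hinv⟩ := ih fun he => h (by rw [he])
    refine ⟨a, ?_, ?_, ?_⟩
    · rwa [labelAt_cons_of_size_lt _ ts hlt]
    · rwa [labelAt_cons_of_size_lt _ _ hlt]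
    · rw [applyRep_cons_of_size_lt a b cs _ hlt, hinv]

lemma insRoot_eq_self {y : α} {l r : ℕ} {F : Forest α}
    (h : ¬(r ≤ F.length + 1 ∧ l ≤ r ∧ 1 ≤ l)) : insRoot y l r F = F := by
  rw [insRoot, if_pos (by omega)]

lemma insRoot_eq (y : α) {l r : ℕ} (F : Forest α) (hr : r ≤ F.length + 1) (hlr : l ≤ r)
    (hl : 1 ≤ l) :
    insRoot y l r F =
      F.take (l - 1) ++ node y ((F.drop (l - 1)).take (r - l)) :: F.drop (r - 1) := by
  rw [insRoot, if_neg (by omega)]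
  split_ifs with he
  · subst he; simp
  · simp

lemma insRoot_cons (y : α) {l : ℕ} (r : ℕ) (t : PTree α) (F : Forest α) (hl : 1 ≤ l) :
    insRoot y (l + 1) (r + 1) (t :: F) = t :: insRoot y l r F := by
  by_cases hv : r ≤ F.length + 1 ∧ l ≤ r
  · obtain ⟨m, rfl⟩ : ∃ m, l = m + 1 := ⟨l - 1, by omega⟩
    obtain ⟨s, rfl⟩ : ∃ s, r = s + 1 := ⟨r - 1, by omega⟩
    rw [insRoot_eq y _ (by simp; omega) (by omega) (by omega), insRoot_eq y _ hv.1 hv.2 hl]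
    simp
  · rw [insRoot_eq_self (by simp; omega), insRoot_eq_self (by omega)]

lemma applyDel_append_cons (A : Forest α) (b : α) (cs B : Forest α) :
    applyDel (sizeL A + 1) (A ++ node b cs :: B) = A ++ cs ++ B := by
  induction A with
  | nil => simp [sizeL, applyDel_cons_one]
  | cons t A ih =>
    cases t with
    | node u us =>
      have := one_le_size (node u us)
      rw [List.cons_append, sizeL_cons, applyDel_cons_of_size_lt u us _ (by omega),
        show size (node u us) + sizeL A + 1 - size (node u us) = sizeL A + 1 by omega, ih]
      rfl

theorem exists_applyDel_insRoot (y : α) (l r : ℕ) (F : Forest α) (h : insRoot y l r F ≠ F) :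
    ∃ j, 1 ≤ j ∧ labelAt (insRoot y l r F) j = some y ∧
      applyDel j (insRoot y l r F) = F := by
  have hv : r ≤ F.length + 1 ∧ l ≤ r ∧ 1 ≤ l := by
    by_contra hv; exact h (insRoot_eq_self hv)
  rw [insRoot_eq y F hv.1 hv.2.1 hv.2.2]
  refine ⟨sizeL (F.take (l - 1)) + 1, by omega, labelAt_append_cons _ _ _, ?_⟩
  rw [applyDel_append_cons, List.append_assoc,
    show r - 1 = (l - 1) + (r - l) by omega, ← List.drop_drop, List.take_append_drop,
    List.take_append_drop]

theorem exists_applyDel_inverse (y : α) (l r i : ℕ) (F : Forest α)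
    (h : applyIns y l r i F ≠ F) :
    ∃ j, 1 ≤ j ∧ labelAt (applyIns y l r i F) j = some y ∧
      applyDel j (applyIns y l r i F) = F := by
  induction i, F using Forest.index_induction with
  | zero F =>
    rw [applyIns_zero] at h ⊢
    exact exists_applyDel_insRoot y l r F h
  | nil i hi => exact absurd (applyIns_nil y hi) h
  | child i b cs ts h₁ h₂ ih =>
    rw [applyIns_cons_of_le y b cs ts h₁ h₂] at h ⊢
    obtain ⟨j, hj, hy, hinv⟩ := ih fun he => h (by rw [he])
    have hj' : j + 1 ≤ size (node b (applyIns y l r (i - 1) cs)) := by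
      have := le_sizeL_of_labelAt_eq_some hy; rw [size_node]; omega
    refine ⟨j + 1, by omega, ?_, ?_⟩
    · rwa [labelAt_cons_of_le b _ ts (by omega) hj']
    · rw [applyDel_cons_of_le b _ ts (by omega) hj', Nat.add_sub_cancel, hinv]
  | sibling i b cs ts hlt ih =>
    rw [applyIns_cons_of_size_lt y b cs ts hlt] at h ⊢
    obtain ⟨j, hj, hy, hinv⟩ := ih fun he => h (by rw [he])
    refine ⟨size (node b cs) + j, by omega, ?_, ?_⟩
    · rwa [labelAt_cons_of_size_lt _ _ (by omega), Nat.add_sub_cancel_left]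
    · rw [applyDel_cons_of_size_lt b cs _ (by omega), Nat.add_sub_cancel_left, hinv]

theorem exists_applyIns_inverse (i : ℕ) (F : Forest α) (h : applyDel i F ≠ F) :
    ∃ a l r j, labelAt F i = some a ∧ 1 ≤ l ∧ j ≤ sizeL (applyDel i F) ∧
      applyIns a l r j (applyDel i F) = F := by
  induction i, F using Forest.index_induction with
  | zero F => exact absurd (applyDel_zero F) h
  | nil i _ => exact absurd (applyDel_nil i) h
  | child i b cs ts h₁ h₂ ih =>
    rcases Nat.lt_or_ge i 2 with hi | hi
    · obtain rfl : i = 1 := by omega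
      refine ⟨b, 1, cs.length + 1, 0, labelAt_cons_one b cs ts, le_rfl, Nat.zero_le _, ?_⟩
      rw [applyDel_cons_one, applyIns_zero, insRoot_eq b _ (by simp) (by omega) le_rfl]
      simp
    · rw [applyDel_cons_of_le b cs ts hi h₂] at h ⊢
      obtain ⟨a, l, r, j, ha, hl, hj, hinv⟩ := ih fun he => h (by rw [he])
      refine ⟨a, l, r, j + 1, by rwa [labelAt_cons_of_le b cs ts hi h₂], hl,
        by rw [sizeL_cons, size_node]; omega, ?_⟩
      rw [applyIns_cons_of_le a b _ ts (by omega) (by rw [size_node]; omega),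
        Nat.add_sub_cancel, hinv]
  | sibling i b cs ts hlt ih =>
    rw [applyDel_cons_of_size_lt b cs ts hlt] at h ⊢
    obtain ⟨a, l, r, j, ha, hl, hj, hinv⟩ := ih fun he => h (by rw [he])
    have ha' : labelAt (node b cs :: ts) i = some a := by
      rwa [labelAt_cons_of_size_lt _ ts hlt]
    rcases Nat.eq_zero_or_pos j with rfl | hj₀
    · refine ⟨a, l + 1, r + 1, 0, ha', by omega, Nat.zero_le _, ?_⟩
      rw [applyIns_zero, insRoot_cons a r _ _ hl, ← applyIns_zero, hinv]
    · refine ⟨a, l, r, size (node b cs) + j, ha', hl, by rw [sizeL_cons]; omega, ?_⟩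
      rw [applyIns_cons_of_size_lt a b cs _ (by omega), Nat.add_sub_cancel_left, hinv]

lemma editCost_del (c : Cost α) {i : ℕ} {F : Forest α} (h : applyDel i F ≠ F) :
    editCost c (.del i) F = c (labelAt F i) none := by
  simp [editCost, Edit.apply, h]

lemma editCost_rep (c : Cost α) {i : ℕ} {y : α} {F : Forest α} (h : applyRep y i F ≠ F) :
    editCost c (.rep i y) F = c (labelAt F i) (some y) := by
  simp [editCost, Edit.apply, h]

lemma editCost_ins (c : Cost α) {i l r : ℕ} {y : α} {F : Forest α}
    (h : applyIns y l r i F ≠ F) :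
    editCost c (.ins i y l r) F = c none (some y) := by
  simp [editCost, Edit.apply, h]

lemma apply_ne_self_of_apply_eq {β : Type*} {f g : β → β} {x : β} (hx : f x ≠ x)
    (hgf : g (f x) = x) : g (f x) ≠ f x :=
  fun hfix => hx (hfix.symm.trans hgf)

theorem Edit.exists_inverse {c : Cost α} (hs : Symm c) (e : Edit α) (F : Forest α) :
    ∃ e' : Edit α, e'.apply (e.apply F) = F ∧ editCost c e' (e.apply F) = editCost c e F := by
  by_cases hid : e.apply F = F
  · exact ⟨e, by rw [hid, hid], by rw [hid]⟩
  cases e with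
  | del i =>
    obtain ⟨a, l, r, j, ha, -, -, hinv⟩ := exists_applyIns_inverse i F hid
    refine ⟨.ins j a l r, hinv, ?_⟩
    rw [editCost_ins c (apply_ne_self_of_apply_eq hid hinv), editCost_del c hid, ha]
    exact hs _ _
  | rep i y =>
    obtain ⟨a, ha, hy, hinv⟩ := exists_applyRep_inverse y i F hid
    refine ⟨.rep i a, hinv, ?_⟩
    rw [editCost_rep c (apply_ne_self_of_apply_eq hid hinv), editCost_rep c hid, ha]
    simp only [Edit.apply]
    rw [hy]
    exact hs _ _
  | ins i y l r =>
    obtain ⟨j, -, hy, hinv⟩ := exists_applyDel_inverse y l r i F hid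
    refine ⟨.del j, hinv, ?_⟩
    rw [editCost_del c (apply_ne_self_of_apply_eq hid hinv), editCost_ins c hid]
    simp only [Edit.apply]
    rw [hy]
    exact hs _ _

lemma applyScript_cons (e : Edit α) (δ : List (Edit α)) (F : Forest α) :
    applyScript (e :: δ) F = applyScript δ (e.apply F) :=
  rfl

lemma applyScript_append (δ₁ δ₂ : List (Edit α)) (F : Forest α) :
    applyScript (δ₁ ++ δ₂) F = applyScript δ₂ (applyScript δ₁ F) :=
  List.foldl_append

lemma scriptCost_append (c : Cost α) (δ₁ δ₂ : List (Edit α)) (F : Forest α) :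
    scriptCost c (δ₁ ++ δ₂) F =
      scriptCost c δ₁ F + scriptCost c δ₂ (applyScript δ₁ F) := by
  induction δ₁ generalizing F with
  | nil => rw [List.nil_append, scriptCost, zero_add]; rfl
  | cons e δ ih => rw [List.cons_append, scriptCost, scriptCost, ih, add_assoc]; rfl

theorem exists_inverse_script {c : Cost α} (hs : Symm c) (δ : List (Edit α)) (F : Forest α) :
    ∃ δ' : List (Edit α), applyScript δ' (applyScript δ F) = F ∧
      scriptCost c δ' (applyScript δ F) = scriptCost c δ F := by
  induction δ generalizing F with
  | nil => exact ⟨[], rfl, rfl⟩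
  | cons e δ ih =>
    obtain ⟨e', he, hce⟩ := e.exists_inverse hs F
    obtain ⟨δ', hδ, hcδ⟩ := ih (e.apply F)
    refine ⟨δ' ++ [e'], ?_, ?_⟩
    · rw [applyScript_cons, applyScript_append, hδ]
      exact he
    · rw [applyScript_cons, scriptCost_append, hcδ, hδ, scriptCost, scriptCost, scriptCost, hce]
      ring

theorem fdist_comm {c : Cost α} (hs : Symm c) (F G : Forest α) : fdist c F G = fdist c G F := by
  have hsub {F G : Forest α} :
      { r | ∃ δ, applyScript δ F = G ∧ scriptCost c δ F = r } ⊆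
        { r | ∃ δ, applyScript δ G = F ∧ scriptCost c δ G = r } := by
    rintro _ ⟨δ, rfl, rfl⟩
    obtain ⟨δ', hδ', hc⟩ := exists_inverse_script hs δ F
    exact ⟨δ', hδ', hc⟩
  exact congrArg sInf (hsub.antisymm hsub)

end

/-- If the cost function `c` is non-negative and symmetric, then the
generalized tree edit distance `d_c` is symmetric. -/
theorem ted_symm {α : Type} (c : Cost α) (hnn : Nonneg c) (hs : Symm c) :
    ∀ x y : PTree α, ted c x y = ted c y x :=
  fun x y => fdist_comm hs [x] [y]

end TED
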